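/- arXiv:2312.13251 — 2 statements merged into one kernel-verified Lean document; each statement's English description precedes it below -/
import Mathlib

section
/- A finite 2-group S whose center contains an element g such that the centralizer of g in S has a subnormal series H₁ ⊴ H₂ ⊴ H₃ ⊴ S with H₁, H₂/H₁ cyclic and [H₃:H₂] ≤ 2, [S:H₃] ≤ 2, has every subgroup generated by at most 4 elements (sectional rank at most 4). -/
open Subgroup

lemma cyc_of_card_le_two {Q : Type*} [Group Q] [Finite Q] (h : Nat.card Q ≤ 2) :
    IsCyclic Q := by
  have h0 : 0 < Nat.card Q := Nat.card_pos
  interval_cases hc : Nat.card Q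
  · have : Subsingleton Q := Nat.card_eq_one_iff_unique.mp hc |>.1
    exact isCyclic_of_subsingleton
  · haveI : Fact (Nat.Prime 2) := ⟨Nat.prime_two⟩
    exact isCyclic_of_prime_card hc

lemma lemB {S : Type*} [Group S] (N G K : Subgroup S) (hKG : K ≤ G)
    (hnorm : (N.subgroupOf G).Normal) (hcyc : IsCyclic (G ⧸ N.subgroupOf G)) :
    ∃ x ∈ K, ∀ k ∈ K, ∃ n : ℤ, k * (x ^ n)⁻¹ ∈ N := by
  haveI := hnorm
  haveI := hcyc
  set φ := QuotientGroup.mk' (N.subgroupOf G) with hφ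
  set J := (K.subgroupOf G).map φ with hJ
  obtain ⟨⟨q, hq⟩, hgen⟩ := IsCyclic.exists_generator (α := J)
  obtain ⟨⟨x, hxG⟩, hxK, hxq⟩ := hq
  have hxK' : x ∈ K := by simpa [mem_subgroupOf] using hxK
  refine ⟨x, hxK', ?_⟩
  intro k hk
  have hkG : k ∈ G := hKG hk
  have hkJ : φ ⟨k, hkG⟩ ∈ J := ⟨⟨k, hkG⟩, by simpa [mem_subgroupOf] using hk, rfl⟩
  obtain ⟨n, hn⟩ := hgen ⟨_, hkJ⟩
  have hq' : q ^ n = φ ⟨k, hkG⟩ := by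
    have := congrArg Subtype.val hn
    simpa using this
  have hfx : φ ((⟨x, hxG⟩ : G) ^ n) = φ ⟨k, hkG⟩ := by
    rw [map_zpow, hxq, hq']
  have hmem : (⟨k, hkG⟩ : G) * ((⟨x, hxG⟩ : G) ^ n)⁻¹ ∈ N.subgroupOf G := by
    have : φ ((⟨k, hkG⟩ : G) * ((⟨x, hxG⟩ : G) ^ n)⁻¹) = 1 := by
      rw [map_mul, map_inv, hfx, mul_inv_cancel]
    rwa [← MonoidHom.mem_ker, QuotientGroup.ker_mk'] at this
  rw [mem_subgroupOf] at hmem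
  exact ⟨n, by simpa using hmem⟩

lemma stepL {S : Type*} [Group S] (N K : Subgroup S) (x : S) (hx : x ∈ K)
    (h : ∀ k ∈ K, ∃ n : ℤ, k * (x ^ n)⁻¹ ∈ N) (s : Finset S) (m : ℕ) (hs : s.card ≤ m)
    (hgen : Subgroup.closure (s : Set S) = N ⊓ K) :
    ∃ t : Finset S, t.card ≤ m + 1 ∧ Subgroup.closure (t : Set S) = K := by
  classical
  refine ⟨insert x s, le_trans (Finset.card_insert_le x s) (by omega), ?_⟩
  apply le_antisymm
  · rw [Subgroup.closure_le]
    intro y hy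
    simp only [Finset.coe_insert, Set.mem_insert_iff] at hy
    rcases hy with rfl | hy
    · exact hx
    · have : y ∈ Subgroup.closure (s : Set S) := Subgroup.subset_closure hy
      rw [hgen] at this
      exact this.2
  · intro k hk
    obtain ⟨n, hn⟩ := h k hk
    have h1 : k * (x ^ n)⁻¹ ∈ N ⊓ K :=
      ⟨hn, mul_mem hk (K.inv_mem (K.zpow_mem hx n))⟩
    rw [← hgen] at h1
    have hsub : Subgroup.closure (s : Set S) ≤ Subgroup.closure ((insert x s : Finset S) : Set S) :=
      Subgroup.closure_mono (by simp [Finset.coe_insert, Set.subset_insert])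
    have hx' : x ∈ Subgroup.closure ((insert x s : Finset S) : Set S) :=
      Subgroup.subset_closure (by simp)
    have : (k * (x ^ n)⁻¹) * x ^ n ∈ Subgroup.closure ((insert x s : Finset S) : Set S) :=
      mul_mem (hsub h1) (Subgroup.zpow_mem _ hx' n)
    simpa using this

theorem stmt4 {S : Type*} [Group S] [Fintype S] (hp : IsPGroup 2 S)
    (g : S) (hg : g ∈ Subgroup.center S)
    (H₁ H₂ H₃ : Subgroup S) (h12 : H₁ ≤ H₂) (h23 : H₂ ≤ H₃)
    (h3c : H₃ ≤ Subgroup.centralizer {g})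
    (hn12 : (H₁.subgroupOf H₂).Normal) (hn23 : (H₂.subgroupOf H₃).Normal)
    (hn3 : H₃.Normal)
    (hc1 : IsCyclic H₁) (hc2 : IsCyclic (H₂ ⧸ H₁.subgroupOf H₂))
    (hi23 : (H₂.subgroupOf H₃).index ≤ 2) (hi3 : H₃.index ≤ 2) :
    ∀ K : Subgroup S, ∃ s : Finset S, s.card ≤ 4 ∧ Subgroup.closure (s : Set S) = K := by
  intro K
  -- Stage 1 : K ⊓ H₁ is cyclic
  have hcyc1 : IsCyclic (H₁ ⧸ (⊥ : Subgroup S).subgroupOf H₁) :=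
    isCyclic_of_surjective _ (QuotientGroup.mk'_surjective _)
  obtain ⟨x₁, hx₁, h₁⟩ := lemB (⊥ : Subgroup S) H₁ (K ⊓ H₁) inf_le_right
    (by infer_instance) hcyc1
  obtain ⟨s₁, hs₁, hgen₁⟩ := stepL ⊥ (K ⊓ H₁) x₁ hx₁ h₁ ∅ 0 (by simp)
    (by simp)
  -- Stage 2 : up to K ⊓ H₂
  obtain ⟨x₂, hx₂, h₂⟩ := lemB H₁ H₂ (K ⊓ H₂) inf_le_right hn12 hc2
  obtain ⟨s₂, hs₂, hgen₂⟩ := stepL H₁ (K ⊓ H₂) x₂ hx₂ h₂ s₁ 1 hs₁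
    (by rw [hgen₁, inf_left_comm, inf_eq_left.mpr h12, inf_comm])
  -- Stage 3 : up to K ⊓ H₃
  have hcyc3 : IsCyclic (H₃ ⧸ H₂.subgroupOf H₃) := cyc_of_card_le_two hi23
  obtain ⟨x₃, hx₃, h₃⟩ := lemB H₂ H₃ (K ⊓ H₃) inf_le_right hn23 hcyc3
  obtain ⟨s₃, hs₃, hgen₃⟩ := stepL H₂ (K ⊓ H₃) x₃ hx₃ h₃ s₂ 2 hs₂
    (by rw [hgen₂, inf_left_comm, inf_eq_left.mpr h23, inf_comm])
  -- Stage 4 : up to K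
  have hi4 : (H₃.subgroupOf ⊤).index ≤ 2 := by
    have : (H₃.subgroupOf ⊤).index = H₃.relIndex ⊤ := rfl
    rw [this, Subgroup.relIndex_top_right]
    exact hi3
  have hcyc4 : IsCyclic ((⊤ : Subgroup S) ⧸ H₃.subgroupOf ⊤) := cyc_of_card_le_two hi4
  obtain ⟨x₄, hx₄, h₄⟩ := lemB H₃ ⊤ K le_top (hn3.subgroupOf ⊤) hcyc4
  obtain ⟨s₄, hs₄, hgen₄⟩ := stepL H₃ K x₄ hx₄ h₄ s₃ 3 hs₃
    (by rw [hgen₃, inf_comm])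
  exact ⟨s₄, hs₄, hgen₄⟩
end

section
/- Every group of order 16 containing a subgroup isomorphic to (Z/2)³ and also containing an element of order 2 outside that subgroup is isomorphic to (Z/2)⁴ or to D₈ × Z/2, where D₈ is the dihedral group of order 8. -/
/-!
An index-two subgroup is normal, so conjugation by the involution `b ∉ A` is an involutive
automorphism `σ` of the elementary abelian group `A ≅ (ℤ/2)³`. If `σ = 1`, then `B = A ∪ A b` is
abelian of exponent 2, hence `(ℤ/2)⁴`. Otherwise take `x ∈ A` with `σ x ≠ x`: then `p = x b`
satisfies `p⁴ = 1` and `b p b⁻¹ = p⁻¹`, and `y = p² = x σ(x)` is a nontrivial fixed point of `σ`.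
The map `v ↦ v σ(v)` has kernel and image inside `Fix σ`, so `|Fix σ|² ≥ 8` and there is a fixed
point `z ∉ {1, y}`, which commutes with `p` and `b`. Hence `r ↦ p, s ↦ b` and `c ↦ z` define a
homomorphism `D₄ × ℤ/2 → B`; it is onto because each of `y, z, x, b` lies outside the subgroup
generated by the previous ones, so its image has at least `2⁴` elements.
-/

section ExponentTwo

variable {G : Type*} [Group G]

theorem mul_comm_of_forall_sq_eq_one (hG : ∀ g : G, g ^ 2 = 1) (a b : G) : a * b = b * a := by
  have hinv : ∀ g : G, g⁻¹ = g := fun g => inv_eq_of_mul_eq_one_left (by rw [← sq, hG])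
  rw [← hinv (a * b), mul_inv_rev, hinv, hinv]

theorem nonempty_mulEquiv_of_forall_sq_eq_one {H : Type*} [Group H] [Finite G] [Finite H]
    (hG : ∀ g : G, g ^ 2 = 1) (hH : ∀ h : H, h ^ 2 = 1) (hcard : Nat.card G = Nat.card H) :
    Nonempty (G ≃* H) := by
  let _ : CommGroup G := { mul_comm := mul_comm_of_forall_sq_eq_one hG }
  let _ : CommGroup H := { mul_comm := mul_comm_of_forall_sq_eq_one hH }
  let _ : Module (ZMod 2) (Additive G) := AddCommGroup.zmodModule fun g => hG g.toMul
  let _ : Module (ZMod 2) (Additive H) := AddCommGroup.zmodModule fun h => hH h.toMul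
  have hrank : Module.finrank (ZMod 2) (Additive G) = Module.finrank (ZMod 2) (Additive H) := by
    have hG' := Module.natCard_eq_pow_finrank (K := ZMod 2) (V := Additive G)
    have hH' := Module.natCard_eq_pow_finrank (K := ZMod 2) (V := Additive H)
    rw [Nat.card_zmod] at hG' hH'
    exact Nat.pow_right_injective le_rfl (hG'.symm.trans (hcard.trans hH'))
  exact ⟨MulEquiv.toAdditive.symm (LinearEquiv.ofFinrankEq _ _ hrank).toAddEquiv⟩

theorem Subgroup.commute_of_forall_sq_eq_one {H : Subgroup G} (hH : ∀ h ∈ H, h ^ 2 = 1) {a b : G}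
    (ha : a ∈ H) (hb : b ∈ H) : Commute a b :=
  Subtype.ext_iff.1 <|
    mul_comm_of_forall_sq_eq_one (fun h : H => Subtype.ext (hH h h.2)) ⟨a, ha⟩ ⟨b, hb⟩

end ExponentTwo

section Involutions

variable {G : Type*} [Group G] {x b p : G}

theorem conj_mul_eq_inv_of_sq_eq_one (hx : x ^ 2 = 1) (hb : b ^ 2 = 1) :
    b * (x * b) * b⁻¹ = (x * b)⁻¹ := by
  rw [mul_inv_rev, inv_eq_of_mul_eq_one_left (sq b ▸ hb), inv_eq_of_mul_eq_one_left (sq x ▸ hx),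
    mul_assoc, mul_assoc, ← sq, hb, mul_one]

theorem commute_of_mul_sq_eq_one (hx : x ^ 2 = 1) (hb : b ^ 2 = 1) (hxb : (x * b) ^ 2 = 1) :
    Commute x b := by
  have h := inv_eq_of_mul_eq_one_left (sq (x * b) ▸ hxb)
  rwa [mul_inv_rev, inv_eq_of_mul_eq_one_left (sq b ▸ hb), inv_eq_of_mul_eq_one_left (sq x ▸ hx),
    eq_comm] at h

theorem commute_sq_of_conj_eq_inv (hbp : b * p * b⁻¹ = p⁻¹) (hp : p ^ 4 = 1) :
    Commute (p ^ 2) b := by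
  have h : b * p ^ 2 * b⁻¹ = p ^ 2 := by
    rw [← conj_pow, hbp, inv_pow, inv_eq_of_mul_eq_one_left (by rw [← sq, ← pow_mul, hp])]
  exact (mul_inv_eq_iff_eq_mul.1 h).symm

theorem zpow_mul_eq_mul_zpow_neg (hb : b ^ 2 = 1) (hbp : b * p * b⁻¹ = p⁻¹) (k : ℤ) :
    p ^ k * b = b * p ^ (-k) := by
  rw [← inv_zpow', ← hbp, conj_zpow, inv_eq_of_mul_eq_one_left (sq b ▸ hb), ← mul_assoc,
    ← mul_assoc, ← sq, hb, one_mul]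

end Involutions

namespace ZMod

variable {G : Type*} [Group G] {n : ℕ}

noncomputable def powHom (g : G) (hg : g ^ n = 1) : Multiplicative (ZMod n) →* G :=
  AddMonoidHom.toMultiplicativeLeft <| ZMod.lift n
    ⟨zmultiplesHom (Additive G) (Additive.ofMul g), by
      rw [zmultiplesHom_apply, natCast_zsmul, ← ofMul_pow, hg, ofMul_one]⟩

theorem powHom_ofAdd_intCast (g : G) (hg : g ^ n = 1) (k : ℤ) :
    powHom g hg (Multiplicative.ofAdd (k : ZMod n)) = g ^ k := by
  simp [powHom, ← ofMul_zpow]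

theorem powHom_ofAdd_one (g : G) (hg : g ^ n = 1) : powHom g hg (Multiplicative.ofAdd 1) = g := by
  simpa using powHom_ofAdd_intCast g hg 1

theorem powHom_mem {H : Subgroup G} {g : G} (hg : g ^ n = 1) (hgH : g ∈ H)
    (i : Multiplicative (ZMod n)) : powHom g hg i ∈ H := by
  obtain ⟨k, hk⟩ := ZMod.intCast_surjective i.toAdd
  rw [← ofAdd_toAdd i, ← hk, powHom_ofAdd_intCast]
  exact zpow_mem hgH k

end ZMod

namespace DihedralGroup

variable {G : Type*} [Group G] {n : ℕ} {a b : G}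

noncomputable def lift (ha : a ^ n = 1) (hb : b ^ 2 = 1) (hba : b * a * b⁻¹ = a⁻¹) :
    DihedralGroup n →* G where
  toFun
    | .r i => ZMod.powHom a ha (.ofAdd i)
    | .sr i => b * ZMod.powHom a ha (.ofAdd i)
  map_one' := map_one (ZMod.powHom a ha)
  map_mul' := by
    have hswap (i : ZMod n) :
        ZMod.powHom a ha (.ofAdd i) * b = b * ZMod.powHom a ha (.ofAdd (-i)) := by
      obtain ⟨k, rfl⟩ := ZMod.intCast_surjective i
      rw [← Int.cast_neg, ZMod.powHom_ofAdd_intCast, ZMod.powHom_ofAdd_intCast,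
        zpow_mul_eq_mul_zpow_neg hb hba]
    have hbb : b * b = 1 := by rw [← sq, hb]
    rintro (i | i) (j | j) <;>
      simp only [r_mul_r, r_mul_sr, sr_mul_r, sr_mul_sr, sub_eq_neg_add, ofAdd_add, map_mul]
    · rw [← mul_assoc _ b, hswap, mul_assoc]
    · rw [mul_assoc]
    · rw [← mul_assoc (b * _), mul_assoc b, hswap, ← mul_assoc, hbb, one_mul]

theorem lift_r_one (ha : a ^ n = 1) (hb : b ^ 2 = 1) (hba : b * a * b⁻¹ = a⁻¹) :
    lift ha hb hba (r 1) = a :=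
  ZMod.powHom_ofAdd_one a ha

theorem lift_sr_zero (ha : a ^ n = 1) (hb : b ^ 2 = 1) (hba : b * a * b⁻¹ = a⁻¹) :
    lift ha hb hba (sr 0) = b := by
  change b * ZMod.powHom a ha (.ofAdd 0) = b
  rw [ofAdd_zero, map_one, mul_one]

theorem lift_mem {H : Subgroup G} (ha : a ^ n = 1) (hb : b ^ 2 = 1) (hba : b * a * b⁻¹ = a⁻¹)
    (haH : a ∈ H) (hbH : b ∈ H) (g : DihedralGroup n) : lift ha hb hba g ∈ H := by
  rcases g with i | i
  · exact ZMod.powHom_mem ha haH _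
  · exact H.mul_mem hbH (ZMod.powHom_mem ha haH _)

end DihedralGroup

theorem exists_dihedralGroup_prod_monoidHom {G : Type*} [Group G] {n : ℕ} {a b c : G}
    (ha : a ^ n = 1) (hb : b ^ 2 = 1) (hba : b * a * b⁻¹ = a⁻¹) (hc : c ^ 2 = 1)
    (hac : Commute a c) (hbc : Commute b c) :
    ∃ ψ : DihedralGroup n × Multiplicative (ZMod 2) →* G,
      a ∈ ψ.range ∧ b ∈ ψ.range ∧ c ∈ ψ.range := by
  let f := DihedralGroup.lift ha hb hba
  let g := ZMod.powHom c hc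
  have hfg (m : DihedralGroup n) (k : Multiplicative (ZMod 2)) : Commute (f m) (g k) := by
    have hfm : f m ∈ Subgroup.centralizer {c} :=
      DihedralGroup.lift_mem ha hb hba (Subgroup.mem_centralizer_singleton_iff.2 hac.eq)
        (Subgroup.mem_centralizer_singleton_iff.2 hbc.eq) m
    have hgk : g k ∈ Subgroup.centralizer {f m} :=
      ZMod.powHom_mem hc (Subgroup.mem_centralizer_singleton_iff.2
        (Subgroup.mem_centralizer_singleton_iff.1 hfm).symm) k
    exact (Subgroup.mem_centralizer_singleton_iff.1 hgk).symm
  refine ⟨f.noncommCoprod g hfg, ⟨(.r 1, 1), ?_⟩, ⟨(.sr 0, 1), ?_⟩, ⟨(1, .ofAdd 1), ?_⟩⟩ <;>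
    simp only [MonoidHom.noncommCoprod_apply, map_one, mul_one, one_mul, f, g,
      DihedralGroup.lift_r_one, DihedralGroup.lift_sr_zero, ZMod.powHom_ofAdd_one]

namespace Subgroup

variable {G : Type*} [Group G] [Finite G]

theorem two_mul_card_le_card_sup_zpowers {H : Subgroup G} {g : G} (hg : g ∉ H) :
    2 * Nat.card H ≤ Nat.card ↥(H ⊔ zpowers g) := by
  have hle : H ≤ H ⊔ zpowers g := le_sup_left
  obtain ⟨k, hk⟩ := card_dvd_of_le hle
  have hk0 : k ≠ 0 := by
    rintro rfl
    exact Nat.card_pos.ne' (hk.trans (mul_zero _))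
  have hk1 : k ≠ 1 := by
    rintro rfl
    have hsup := eq_of_le_of_card_ge hle (by rw [hk, mul_one])
    exact hg (hsup ▸ mem_sup_right (mem_zpowers g))
  rw [hk, mul_comm]
  exact Nat.mul_le_mul_left _ (by omega)

end Subgroup

theorem nonempty_mulEquiv_of_card_le_card_range {G H : Type*} [Group G] [Group H] [Finite G]
    [Finite H] (ψ : G →* H) (hcard : Nat.card G = Nat.card H)
    (hψ : Nat.card H ≤ Nat.card ψ.range) : Nonempty (H ≃* G) :=
  have hsurj := MonoidHom.range_eq_top.1 (Subgroup.eq_top_of_le_card _ hψ)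
  ⟨(MulEquiv.ofBijective ψ ((Nat.bijective_iff_surjective_and_card ψ).2 ⟨hsurj, hcard⟩)).symm⟩

theorem card_le_card_eqLocus_sq {V : Type*} [Group V] [Finite V] (hV : ∀ v : V, v ^ 2 = 1)
    (σ : V →* V) (hσ : ∀ v, σ (σ v) = v) :
    Nat.card V ≤ Nat.card (σ.eqLocus (MonoidHom.id V)) ^ 2 := by
  have hcomm := mul_comm_of_forall_sq_eq_one hV
  let φ : V →* V :=
    { toFun v := v * σ v
      map_one' := by simp
      map_mul' u v := by
        simp only [map_mul, mul_assoc]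
        rw [← mul_assoc v, hcomm v, mul_assoc] }
  have hker : φ.ker ≤ σ.eqLocus (MonoidHom.id V) := fun v hv =>
    (eq_inv_of_mul_eq_one_right hv).trans (inv_eq_of_mul_eq_one_left (sq v ▸ hV v))
  have hrange : φ.range ≤ σ.eqLocus (MonoidHom.id V) := by
    rintro _ ⟨v, rfl⟩
    change σ (v * σ v) = v * σ v
    rw [map_mul, hσ, hcomm]
  calc Nat.card V = Nat.card φ.ker * Nat.card φ.range := by
        rw [← Subgroup.index_ker, Subgroup.card_mul_index]
    _ ≤ _ := by
        rw [sq]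
        exact Nat.mul_le_mul (Subgroup.card_le_of_le hker) (Subgroup.card_le_of_le hrange)

section OrderSixteen

open Subgroup

variable {B : Type*} [Group B] {A : Subgroup B} {b : B}

theorem exists_commute_notMem_zpowers [Finite B] [A.Normal] (hA2 : ∀ a ∈ A, a ^ 2 = 1)
    (hcardA : 4 < Nat.card A) (hb : b ^ 2 = 1) {y : B} (hy : y ^ 2 = 1) :
    ∃ z ∈ A, Commute z b ∧ z ∉ zpowers y := by
  let σ : A →* A := (MulAut.conjNormal b).toMonoidHom
  have hσ (a : A) : σ (σ a) = a := by
    change (MulAut.conjNormal b * MulAut.conjNormal b : MulAut A) a = a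
    rw [← map_mul, ← sq, hb, map_one, MulAut.one_apply]
  have hfix := card_le_card_eqLocus_sq (fun a : A => Subtype.ext (hA2 a a.2)) σ hσ
  by_contra! hnot
  have hle : (σ.eqLocus (MonoidHom.id A)).map A.subtype ≤ zpowers y := by
    rintro _ ⟨a, ha, rfl⟩
    refine hnot a a.2 (mul_inv_eq_iff_eq_mul.1 ?_).symm
    exact congrArg Subtype.val ha
  have hcard := card_le_of_le hle
  rw [card_map_of_injective A.subtype_injective, Nat.card_zpowers] at hcard
  have horder := orderOf_le_of_pow_eq_one two_pos hy
  nlinarith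

theorem forall_sq_eq_one_of_index_eq_two (hA : A.index = 2) (hA2 : ∀ a ∈ A, a ^ 2 = 1)
    (hbA : b ∉ A) (hb : b ^ 2 = 1) (hcomm : ∀ a ∈ A, Commute a b) (g : B) : g ^ 2 = 1 := by
  by_cases hg : g ∈ A
  · exact hA2 g hg
  have hgb : g * b ∈ A := by simp [mul_mem_iff_of_index_two hA, hg, hbA]
  have hg_eq : g = g * b * b := by rw [mul_assoc, ← sq, hb, mul_one]
  rw [hg_eq, (hcomm _ hgb).mul_pow, hA2 _ hgb, hb, one_mul]

theorem nonempty_mulEquiv_dihedralGroup_prod [Finite B] (hcard : Nat.card B = 16)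
    (hA : A.index = 2) (hA2 : ∀ a ∈ A, a ^ 2 = 1) (hbA : b ∉ A) (hb : b ^ 2 = 1) {x : B}
    (hxA : x ∈ A) (hxb : ¬Commute x b) :
    Nonempty (B ≃* DihedralGroup 4 × Multiplicative (ZMod 2)) := by
  have : A.Normal := normal_of_index_eq_two hA
  have hcardA : Nat.card A = 8 := by
    have := A.card_mul_index
    rw [hA, hcard] at this
    omega
  set p := x * b with hp
  set y := p ^ 2 with hy
  have hbp : b * p * b⁻¹ = p⁻¹ := conj_mul_eq_inv_of_sq_eq_one (hA2 x hxA) hb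
  have hyA : y ∈ A := by rw [hy, sq]; exact (mul_mem_iff_of_index_two hA).2 Iff.rfl
  have hp4 : p ^ 4 = 1 := by rw [← hA2 y hyA, hy, ← pow_mul]
  have hy1 : y ≠ 1 := fun h => hxb (commute_of_mul_sq_eq_one (hA2 x hxA) hb h)
  have hyb : Commute y b := commute_sq_of_conj_eq_inv hbp hp4
  obtain ⟨z, hzA, hzb, hzy⟩ := exists_commute_notMem_zpowers hA2 (by omega) hb (hA2 y hyA)
  have hpz : Commute p z := ((commute_of_forall_sq_eq_one hA2 hzA hxA).mul_right hzb).symm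
  obtain ⟨ψ, hpψ, hbψ, hzψ⟩ :=
    exists_dihedralGroup_prod_monoidHom hp4 hb hbp (hA2 z hzA) hpz hzb.symm
  have hxψ : x ∈ ψ.range := by
    have : x = p * b := by rw [hp, mul_assoc, ← sq, hb, mul_one]
    exact this ▸ mul_mem hpψ hbψ
  refine nonempty_mulEquiv_of_card_le_card_range ψ (by simp [hcard, DihedralGroup.card]) ?_
  -- each of `y, z, x, b` lies outside the subgroup generated by the previous ones
  have hx : x ∉ zpowers y ⊔ zpowers z := fun h => hxb <| mem_centralizer_singleton_iff.1 <|
    sup_le (zpowers_le.2 (mem_centralizer_singleton_iff.2 hyb.eq))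
      (zpowers_le.2 (mem_centralizer_singleton_iff.2 hzb.eq)) h
  have hb' : b ∉ zpowers y ⊔ zpowers z ⊔ zpowers x := fun h => hbA <|
    sup_le (sup_le (zpowers_le.2 hyA) (zpowers_le.2 hzA)) (zpowers_le.2 hxA) h
  have h1 : Nat.card (zpowers y) = 2 := by
    rw [Nat.card_zpowers, orderOf_eq_prime (hA2 y hyA) hy1]
  have h2 := two_mul_card_le_card_sup_zpowers hzy
  have h3 := two_mul_card_le_card_sup_zpowers hx
  have h4 := two_mul_card_le_card_sup_zpowers hb'
  have hle : zpowers y ⊔ zpowers z ⊔ zpowers x ⊔ zpowers b ≤ ψ.range :=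
    sup_le (sup_le (sup_le (zpowers_le.2 (pow_mem hpψ 2)) (zpowers_le.2 hzψ))
      (zpowers_le.2 hxψ)) (zpowers_le.2 hbψ)
  have := card_le_of_le hle
  omega

end OrderSixteen

theorem stmt5 {B : Type*} [Group B] [Fintype B] (hcard : Fintype.card B = 16)
    (A : Subgroup B)
    (hA : Nonempty (A ≃* (Multiplicative (ZMod 2) × Multiplicative (ZMod 2) × Multiplicative (ZMod 2))))
    (hinv : ∃ b : B, b ∉ A ∧ orderOf b = 2) :
    Nonempty (B ≃* (Multiplicative (ZMod 2) × Multiplicative (ZMod 2) ×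
        Multiplicative (ZMod 2) × Multiplicative (ZMod 2))) ∨
    Nonempty (B ≃* (DihedralGroup 4 × Multiplicative (ZMod 2))) := by
  obtain ⟨e⟩ := hA
  obtain ⟨b, hbA, hb⟩ := hinv
  rw [← Nat.card_eq_fintype_card] at hcard
  have hindex : A.index = 2 := by
    have hcardA : Nat.card A = 8 := by simp [Nat.card_congr e.toEquiv]
    have := A.card_mul_index
    rw [hcardA, hcard] at this
    omega
  have hA2 (a : B) (ha : a ∈ A) : a ^ 2 = 1 := by
    have h : ∀ v : Multiplicative (ZMod 2) × Multiplicative (ZMod 2) × Multiplicative (ZMod 2),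
      v ^ 2 = 1 := by decide
    exact congrArg Subtype.val (e.injective (by rw [map_pow, map_one, h]) : (⟨a, ha⟩ : A) ^ 2 = 1)
  have hb2 : b ^ 2 = 1 := hb ▸ pow_orderOf_eq_one b
  by_cases hcomm : ∀ a ∈ A, Commute a b
  · exact .inl (nonempty_mulEquiv_of_forall_sq_eq_one
      (forall_sq_eq_one_of_index_eq_two hindex hA2 hbA hb2 hcomm) (by decide)
      (hcard.trans (by simp)))
  · push Not at hcomm
    obtain ⟨x, hxA, hxb⟩ := hcomm
    exact .inr (nonempty_mulEquiv_dihedralGroup_prod hcard hindex hA2 hbA hb2 hxA hxb)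
end
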